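/- The bijection M between the symmetry group Sym(Γ) of a game Γ and the automorphism group Aut(G) of its associated labeled graph G (as constructed with action, profile, and payoff-labeled edges) is a group isomorphism: M(φ' ∘ φ) = M(φ') ∘ M(φ), and M maps the identity symmetry to the identity automorphism. -/

import Mathlib

/-- A game symmetry of the game with players `N`, action sets `A i`, and payoffs `u`. -/
structure GameSym (N : Type*) (A : N → Type*) (u : (i : N) → ((j : N) → A j) → ℝ) where
  π : Equiv.Perm N
  e : (Σ i, A i) ≃ (Σ i, A i)
  Φ : ((j : N) → A j) ≃ ((j : N) → A j)
  part : ∀ x : Σ i, A i, (e x).1 = π x.1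
  compat : ∀ (a : (j : N) → A j) (i : N), e ⟨i, a i⟩ = ⟨π i, Φ a (π i)⟩
  payoff : ∀ (i : N) (a : (j : N) → A j), u i a = u (π i) (Φ a)

/-- Composition `φ' ∘ φ` of game symmetries (first apply `s`, then `s'`). -/
def GameSym.comp {N : Type*} {A : N → Type*} {u : (i : N) → ((j : N) → A j) → ℝ}
    (s' s : GameSym N A u) : GameSym N A u where
  π := s.π.trans s'.π
  e := s.e.trans s'.e
  Φ := s.Φ.trans s'.Φ
  part := fun x => by simp [s.part, s'.part]
  compat := fun a i => by
    simp only [Equiv.trans_apply, s.compat a i, s'.compat (s.Φ a) (s.π i)]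
  payoff := fun i a => by rw [s.payoff i a, s'.payoff (s.π i) (s.Φ a)]; rfl

/-- The identity game symmetry. -/
def GameSym.id (N : Type*) (A : N → Type*) (u : (i : N) → ((j : N) → A j) → ℝ) :
    GameSym N A u where
  π := Equiv.refl N
  e := Equiv.refl _
  Φ := Equiv.refl _
  part := fun _ => rfl
  compat := fun _ _ => rfl
  payoff := fun _ _ => rfl

/-- Vertex set of the labeled graph associated to a game. -/
abbrev GameVertex (N : Type*) (A : N → Type*) : Type _ :=
  N ⊕ (Σ i, A i) ⊕ ((j : N) → A j)

/-- The edge-labeling of the graph associated to a game. -/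
def gameGraphLabel {N : Type*} [DecidableEq N] {A : N → Type*} [∀ i, DecidableEq (A i)]
    (u : (i : N) → ((j : N) → A j) → ℝ) (lam lam' : ℝ) :
    GameVertex N A → GameVertex N A → Option ℝ
  | Sum.inl i, Sum.inr (Sum.inl x) => if x.1 = i then some lam else none
  | Sum.inr (Sum.inl x), Sum.inl i => if x.1 = i then some lam else none
  | Sum.inr (Sum.inl x), Sum.inr (Sum.inr a) => if a x.1 = x.2 then some lam' else none
  | Sum.inr (Sum.inr a), Sum.inr (Sum.inl x) => if a x.1 = x.2 then some lam' else none
  | Sum.inl i, Sum.inr (Sum.inr a) => some (u i a)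
  | Sum.inr (Sum.inr a), Sum.inl i => some (u i a)
  | _, _ => none

/-!
A game symmetry acts on the three kinds of vertices separately, and the axioms `part`, `compat`
and `payoff` say precisely that this action preserves the labels of the edges `{i, a}`, `{a, 𝐚}`
and `{i, 𝐚}`. Conversely, since `λ`, `λ'` differ from each other and from all payoffs, the labels
determine the kind of a vertex: players are the vertices with a `λ`-edge but no `λ'`-edge, and
among the others the action vertices are those with a `λ`-edge. A label-preserving permutation
therefore splits as a sum of permutations of players, actions and profiles, and reading the label
equations backwards makes it a game symmetry.
-/

theorem Equiv.Perm.exists_label_apply_iff {V L : Type*} {ℓ : V → V → L} {ψ : Equiv.Perm V}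
    (hψ : ∀ v w, ℓ (ψ v) (ψ w) = ℓ v w) (c : L) (v : V) :
    (∃ w, ℓ (ψ v) w = c) ↔ ∃ w, ℓ v w = c :=
  ⟨fun ⟨w, hw⟩ => ⟨ψ.symm w, by rwa [← hψ, ψ.apply_symm_apply]⟩,
    fun ⟨w, hw⟩ => ⟨ψ w, by rwa [hψ]⟩⟩

section Label

variable {N : Type*} [DecidableEq N] {A : N → Type*} [∀ i, DecidableEq (A i)]
  {u : (i : N) → ((j : N) → A j) → ℝ} {lam lam' : ℝ}

theorem gameGraphLabel_inl_ne_lam' (hll : lam ≠ lam') (hlam' : ∀ i a, u i a ≠ lam') (i : N)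
    (w : GameVertex N A) : gameGraphLabel u lam lam' (.inl i) w ≠ some lam' := by
  rcases w with j | y | b <;> simp [gameGraphLabel, hll, hlam']

theorem gameGraphLabel_profile_ne_lam (hll : lam ≠ lam') (hlam : ∀ i a, u i a ≠ lam)
    (a : (j : N) → A j) (w : GameVertex N A) :
    gameGraphLabel u lam lam' (.inr (.inr a)) w ≠ some lam := by
  rcases w with j | y | b <;> simp [gameGraphLabel, hll.symm, hlam]

theorem gameGraphLabel_mem_range_inl_iff [∀ i, Nonempty (A i)] (hll : lam ≠ lam')
    (hlam : ∀ i a, u i a ≠ lam) (hlam' : ∀ i a, u i a ≠ lam') (v : GameVertex N A) :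
    v ∈ Set.range Sum.inl ↔
      (∃ w, gameGraphLabel u lam lam' v w = some lam) ∧
        ¬ ∃ w, gameGraphLabel u lam lam' v w = some lam' := by
  rcases v with i | x | a
  · exact iff_of_true ⟨i, rfl⟩
      ⟨⟨.inr (.inl ⟨i, Classical.arbitrary _⟩), by simp [gameGraphLabel]⟩,
        fun ⟨w, hw⟩ => gameGraphLabel_inl_ne_lam' hll hlam' i w hw⟩
  · refine iff_of_false (by simp) fun ⟨_, hno⟩ => hno ?_
    exact ⟨.inr (.inr (Function.update (fun j => Classical.arbitrary (A j)) x.1 x.2)),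
      by simp [gameGraphLabel]⟩
  · exact iff_of_false (by simp) fun ⟨⟨w, hw⟩, _⟩ => gameGraphLabel_profile_ne_lam hll hlam a w hw

theorem gameGraphLabel_inr_mem_range_inl_iff (hll : lam ≠ lam') (hlam : ∀ i a, u i a ≠ lam)
    (x : (Σ i, A i) ⊕ ((j : N) → A j)) :
    x ∈ Set.range Sum.inl ↔ ∃ w, gameGraphLabel u lam lam' (.inr x) w = some lam := by
  rcases x with x | a
  · exact iff_of_true ⟨x, rfl⟩ ⟨.inl x.1, by simp [gameGraphLabel]⟩
  · exact iff_of_false (by simp) fun ⟨w, hw⟩ => gameGraphLabel_profile_ne_lam hll hlam a w hw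

end Label

namespace GameSym

variable {N : Type*} {A : N → Type*} {u : (i : N) → ((j : N) → A j) → ℝ}

def toPerm (s : GameSym N A u) : Equiv.Perm (GameVertex N A) :=
  Equiv.Perm.sumCongr s.π (Equiv.Perm.sumCongr s.e s.Φ)

theorem toPerm_injective : Function.Injective (toPerm : GameSym N A u → _) := by
  intro s t h
  obtain ⟨π, e, Φ, _, _, _⟩ := s
  obtain ⟨π', e', Φ', _, _, _⟩ := t
  obtain ⟨rfl, h'⟩ := Prod.ext_iff.mp
    (@Equiv.Perm.sumCongrHom_injective _ _ (π, Equiv.Perm.sumCongr e Φ) (π', _) h)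
  obtain ⟨rfl, rfl⟩ := Prod.ext_iff.mp
    (@Equiv.Perm.sumCongrHom_injective _ _ (e, Φ) (e', Φ') h')
  rfl

theorem toPerm_comp (s s' : GameSym N A u) : (s'.comp s).toPerm = s.toPerm.trans s'.toPerm := by
  ext (i | x | a) <;> rfl

theorem toPerm_id : (GameSym.id N A u).toPerm = Equiv.refl _ := by
  ext (i | x | a) <;> rfl

theorem Φ_apply_e_fst_eq_iff (s : GameSym N A u) (a : (j : N) → A j) (x : Σ i, A i) :
    s.Φ a (s.e x).1 = (s.e x).2 ↔ a x.1 = x.2 := by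
  obtain ⟨i, b⟩ := x
  have hfst := s.part ⟨i, b⟩
  rw [← (show s.e ⟨i, a i⟩ = s.e ⟨i, b⟩ ↔ a i = b by simp), s.compat]
  generalize s.e ⟨i, b⟩ = c at hfst ⊢
  obtain ⟨_, c⟩ := c
  subst hfst
  simp [eq_comm]

section Label

variable [DecidableEq N] [∀ i, DecidableEq (A i)] {lam lam' : ℝ}

theorem gameGraphLabel_toPerm (s : GameSym N A u) (v w : GameVertex N A) :
    gameGraphLabel u lam lam' (s.toPerm v) (s.toPerm w) = gameGraphLabel u lam lam' v w := by
  rcases v with i | x | a <;> rcases w with j | y | b <;>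
    simp [toPerm, gameGraphLabel, s.part, Φ_apply_e_fst_eq_iff, ← s.payoff]

def ofPerm (π : Equiv.Perm N) (e : Equiv.Perm (Σ i, A i)) (Φ : Equiv.Perm ((j : N) → A j))
    (h : ∀ v w, gameGraphLabel u lam lam' (Equiv.Perm.sumCongr π (Equiv.Perm.sumCongr e Φ) v)
      (Equiv.Perm.sumCongr π (Equiv.Perm.sumCongr e Φ) w) = gameGraphLabel u lam lam' v w) :
    GameSym N A u where
  π := π
  e := e
  Φ := Φ
  part x := by simpa [gameGraphLabel] using h (.inl x.1) (.inr (.inl x))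
  compat a i := by
    have hfst : (e ⟨i, a i⟩).1 = π i := by
      simpa [gameGraphLabel] using h (.inl i) (.inr (.inl ⟨i, a i⟩))
    have hsnd : Φ a (e ⟨i, a i⟩).1 = (e ⟨i, a i⟩).2 := by
      simpa [gameGraphLabel] using h (.inr (.inl ⟨i, a i⟩)) (.inr (.inr a))
    generalize e ⟨i, a i⟩ = c at hfst hsnd ⊢
    obtain ⟨_, b⟩ := c
    subst hfst
    rw [hsnd]
  payoff i a := by simpa [gameGraphLabel] using (h (.inl i) (.inr (.inr a))).symm

theorem exists_toPerm_eq [Finite N] [∀ i, Finite (A i)] [∀ i, Nonempty (A i)]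
    (hll : lam ≠ lam') (hlam : ∀ i a, u i a ≠ lam) (hlam' : ∀ i a, u i a ≠ lam')
    (ψ : Equiv.Perm (GameVertex N A))
    (hψ : ∀ v w, gameGraphLabel u lam lam' (ψ v) (ψ w) = gameGraphLabel u lam lam' v w) :
    ∃ s : GameSym N A u, s.toPerm = ψ := by
  have hplayers : Set.MapsTo ψ (Set.range Sum.inl) (Set.range Sum.inl) := fun v hv => by
    rw [gameGraphLabel_mem_range_inl_iff hll hlam hlam'] at hv ⊢
    simpa only [ψ.exists_label_apply_iff hψ] using hv
  obtain ⟨⟨π, τ⟩, rfl⟩ := Equiv.Perm.mem_sumCongrHom_range_of_perm_mapsTo_inl hplayers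
  have hactions : Set.MapsTo τ (Set.range Sum.inl) (Set.range Sum.inl) := fun x hx => by
    rw [gameGraphLabel_inr_mem_range_inl_iff hll hlam] at hx ⊢
    exact (Equiv.Perm.exists_label_apply_iff hψ _ _).2 hx
  obtain ⟨⟨e, Φ⟩, rfl⟩ := Equiv.Perm.mem_sumCongrHom_range_of_perm_mapsTo_inl hactions
  exact ⟨ofPerm π e Φ hψ, rfl⟩

end Label

end GameSym

/-- The bijection `M` between the symmetry group `Sym(Γ)` of a game `Γ` and the automorphism
group `Aut(G)` of its associated labeled graph `G` is a group isomorphism: `M` sends a symmetry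
to the vertex permutation acting as `π` on players, as `φ` on actions and on profiles; it is
bijective, maps composition of symmetries to composition of automorphisms, and maps the
identity symmetry to the identity automorphism. -/
theorem stmt_9 {N : Type*} [Fintype N] [DecidableEq N]
    {A : N → Type*} [∀ i, Fintype (A i)] [∀ i, DecidableEq (A i)] [∀ i, Nonempty (A i)]
    (u : (i : N) → ((j : N) → A j) → ℝ) (lam lam' : ℝ) (hll : lam ≠ lam')
    (hlam : ∀ i a, u i a ≠ lam) (hlam' : ∀ i a, u i a ≠ lam') :
    ∃ M : GameSym N A u →
        {ψ : Equiv.Perm (GameVertex N A) //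
          ∀ v w, gameGraphLabel u lam lam' (ψ v) (ψ w) = gameGraphLabel u lam lam' v w},
      Function.Bijective M ∧
      (∀ s : GameSym N A u,
        (∀ i : N, (M s).1 (Sum.inl i) = Sum.inl (s.π i)) ∧
        (∀ x : Σ i, A i, (M s).1 (Sum.inr (Sum.inl x)) = Sum.inr (Sum.inl (s.e x))) ∧
        (∀ a : (j : N) → A j, (M s).1 (Sum.inr (Sum.inr a)) = Sum.inr (Sum.inr (s.Φ a)))) ∧
      (∀ s s' : GameSym N A u, (M (s'.comp s)).1 = (M s).1.trans (M s').1) ∧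
      (M (GameSym.id N A u)).1 = Equiv.refl (GameVertex N A) := by
  refine ⟨fun s => ⟨s.toPerm, s.gameGraphLabel_toPerm⟩, ⟨?_, ?_⟩,
    fun s => ⟨fun _ => rfl, fun _ => rfl, fun _ => rfl⟩, GameSym.toPerm_comp, GameSym.toPerm_id⟩
  · exact fun s t h => GameSym.toPerm_injective (congrArg Subtype.val h)
  · rintro ⟨ψ, hψ⟩
    obtain ⟨s, rfl⟩ := GameSym.exists_toPerm_eq hll hlam hlam' ψ hψ
    exact ⟨s, rfl⟩
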